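/- arXiv:2303.03765 — 2 statements merged into one kernel-verified Lean document; each statement's English description precedes it below -/
import Mathlib

section
/- An equivalence relation θ on a poset P is a weak order congruence if and only if θ is the kernel of a strong order-preserving map f : P → Q for some poset Q. -/
universe u

def quotRel {P : Type u} [PartialOrder P] (θ : Setoid P) :
    Quotient θ → Quotient θ → Prop :=
  fun a b => ∃ p q : P, a = Quotient.mk θ p ∧ b = Quotient.mk θ q ∧ p ≤ q

/-- `θ` is a weak order congruence: the quotient relation is a partial order. -/
def IsWeakOrderCongruence {P : Type u} [PartialOrder P] (θ : Setoid P) : Prop :=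
  IsPartialOrder (Quotient θ) (quotRel θ)

/-- A map is strong if it is order-preserving and "surjective on relations". -/
def IsStrongMap {P : Type u} {Q : Type u} [PartialOrder P] [PartialOrder Q]
    (f : P → Q) : Prop :=
  Monotone f ∧ ∀ p p' : P, f p ≤ f p' →
    ∃ q q' : P, q ≤ q' ∧ f q = f p ∧ f q' = f p'

theorem weakOrderCongruence_iff_kernel_of_strong_map
    {P : Type u} [PartialOrder P] (θ : Setoid P) :
    IsWeakOrderCongruence θ ↔
      ∃ (Q : Type u) (_ : PartialOrder Q) (f : P → Q),
        IsStrongMap f ∧ ∀ p p' : P, θ.r p p' ↔ f p = f p' := by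
  constructor
  · intro h
    letI : PartialOrder (Quotient θ) :=
      { le := quotRel θ
        lt := fun a b => quotRel θ a b ∧ ¬ quotRel θ b a
        le_refl := h.refl
        le_trans := fun a b c => h.trans a b c
        le_antisymm := fun a b => h.antisymm a b }
    refine ⟨Quotient θ, inferInstance, Quotient.mk θ, ⟨?_, ?_⟩, ?_⟩
    · intro p q hpq
      exact ⟨p, q, rfl, rfl, hpq⟩
    · rintro p p' ⟨q, q', hq, hq', hle⟩
      exact ⟨q, q', hle, hq.symm, hq'.symm⟩
    · intro p p'
      exact ⟨Quotient.sound, Quotient.exact⟩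
  · rintro ⟨Q, _, f, ⟨hmono, hstrong⟩, hker⟩
    have key : ∀ p q : P, f p ≤ f q → quotRel θ (Quotient.mk θ p) (Quotient.mk θ q) := by
      intro p q hle
      obtain ⟨r, r', hrr, hr, hr'⟩ := hstrong p q hle
      exact ⟨r, r', Quotient.sound ((hker p r).mpr hr.symm),
        Quotient.sound ((hker q r').mpr hr'.symm), hrr⟩
    have fle : ∀ a b, quotRel θ a b → ∀ p q : P, a = Quotient.mk θ p →
        b = Quotient.mk θ q → f p ≤ f q := by
      rintro a b ⟨p', q', hp', hq', hle⟩ p q hp hq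
      have h1 : f p = f p' := (hker p p').mp (Quotient.exact (hp.symm.trans hp'))
      have h2 : f q = f q' := (hker q q').mp (Quotient.exact (hq.symm.trans hq'))
      rw [h1, h2]
      exact hmono hle
    refine { refl := ?_, trans := ?_, antisymm := ?_ }
    · intro a
      obtain ⟨p, rfl⟩ := Quotient.exists_rep a
      exact ⟨p, p, rfl, rfl, le_refl p⟩
    · intro a b c hab hbc
      obtain ⟨p, rfl⟩ := Quotient.exists_rep a
      obtain ⟨q, rfl⟩ := Quotient.exists_rep b
      obtain ⟨r, rfl⟩ := Quotient.exists_rep c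
      have h1 := fle _ _ hab p q rfl rfl
      have h2 := fle _ _ hbc q r rfl rfl
      exact key p r (h1.trans h2)
    · intro a b hab hba
      obtain ⟨p, rfl⟩ := Quotient.exists_rep a
      obtain ⟨q, rfl⟩ := Quotient.exists_rep b
      have h1 := fle _ _ hab p q rfl rfl
      have h2 := fle _ _ hba q p rfl rfl
      exact Quotient.sound ((hker p q).mpr (le_antisymm h1 h2))
end

section
/- An equivalence relation θ on a poset P is a compatible congruence if and only if θ is the kernel of some order-preserving map f : P → Q to a poset Q. -/
universe u

/-- `r` is compatible: every `r`-circle lies in a single equivalence class. -/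
def IsCompatible {P : Type u} [PartialOrder P] (r : P → P → Prop) : Prop :=
  ∀ (n : ℕ) (p : Fin (n + 1) → P),
    (∀ i : Fin n, r (p i.castSucc) (p i.succ) ∨ p i.castSucc < p i.succ) →
    p 0 = p (Fin.last n) →
    ∀ i j, r (p i) (p j)

section Aux

variable {P : Type u} [PartialOrder P] (θ : Setoid P)

/-- One step: related by `θ` or `≤`. -/
def CongStep (a b : P) : Prop := θ.r a b ∨ a ≤ b

/-- Reachability by chains of steps. -/
def Reach : P → P → Prop := Relation.ReflTransGen (CongStep θ)

variable {θ}

lemma reach_chain {a b : P} (h : Reach θ a b) :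
    ∃ (n : ℕ) (q : ℕ → P), q 0 = a ∧ q n = b ∧
      ∀ i < n, CongStep θ (q i) (q (i + 1)) := by
  induction h with
  | refl => exact ⟨0, fun _ => a, rfl, rfl, fun i hi => absurd hi (by omega)⟩
  | @tail _ c _ hs ih =>
    obtain ⟨n, q, h0, hn, hstep⟩ := ih
    refine ⟨n + 1, fun i => if i ≤ n then q i else c, by simp [h0], by simp, ?_⟩
    intro i hi
    by_cases h1 : i + 1 ≤ n
    · simpa [h1, show i ≤ n by omega] using hstep i (by omega)
    · have hin : i = n := by omega
      simpa [hin, hn] using hs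

lemma key {a b : P} (hc : IsCompatible θ.r) (hab : Reach θ a b) (hba : Reach θ b a) :
    θ.r a b := by
  obtain ⟨n, q₁, h10, h1n, h1s⟩ := reach_chain hab
  obtain ⟨m, q₂, h20, h2m, h2s⟩ := reach_chain hba
  set Q : ℕ → P := fun i => if i ≤ n then q₁ i else q₂ (i - n) with hQ
  have hQ0 : Q 0 = a := by simp [hQ, h10]
  have hQn : Q n = b := by simp [hQ, h1n]
  have hQlast : Q (n + m) = a := by
    rcases Nat.eq_zero_or_pos m with hm | hm
    · have : b = a := by rw [← h2m, hm, h20]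
      simp [hQ, hm, h1n, this]
    · simp only [hQ]
      rw [if_neg (by omega)]
      simpa using h2m
  have hQstep : ∀ i < n + m, CongStep θ (Q i) (Q (i + 1)) := by
    intro i hi
    by_cases h1 : i + 1 ≤ n
    · simpa [hQ, h1, show i ≤ n by omega] using h1s i (by omega)
    · by_cases h2 : i ≤ n
      · have hin : i = n := by omega
        have : Q (i + 1) = q₂ 1 := by
          simp only [hQ]; rw [if_neg (by omega)]; congr 1; omega
        rw [this, hin, hQn, ← h20]
        exact h2s 0 (by omega)
      · have : Q (i + 1) = q₂ (i - n + 1) := by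
          simp only [hQ]; rw [if_neg (by omega)]; congr 1; omega
        rw [this]
        simp only [hQ, if_neg h2]
        exact h2s (i - n) (by omega)
  set p : Fin (n + m + 1) → P := fun i => Q i.val with hp
  have hsteps : ∀ i : Fin (n + m), θ.r (p i.castSucc) (p i.succ) ∨ p i.castSucc < p i.succ := by
    intro i
    have := hQstep i.val i.isLt
    rcases this with h | h
    · exact Or.inl h
    · rcases lt_or_eq_of_le h with h' | h'
      · exact Or.inr h'
      · refine Or.inl ?_
        show θ.r (Q i.val) (Q (i.val + 1))
        exact h' ▸ θ.refl _
  have hcyc : p 0 = p (Fin.last (n + m)) := by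
    show Q 0 = Q (n + m)
    rw [hQ0, hQlast]
  have := hc (n + m) p hsteps hcyc 0 ⟨n, by omega⟩
  show θ.r a b
  rw [← hQ0, ← hQn]
  exact this

lemma reach_congr_left {a a' b : P} (h : θ.r a a') (hr : Reach θ a' b) : Reach θ a b :=
  Relation.ReflTransGen.head (Or.inl h) hr

lemma reach_congr_right {a b b' : P} (h : θ.r b b') (hr : Reach θ a b) : Reach θ a b' :=
  Relation.ReflTransGen.tail hr (Or.inl h)

end Aux

theorem compatible_iff_kernel_of_monotone
    {P : Type u} [PartialOrder P] (θ : Setoid P) :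
    IsCompatible θ.r ↔
      ∃ (Q : Type u) (_ : PartialOrder Q) (f : P → Q),
        Monotone f ∧ ∀ p p' : P, θ.r p p' ↔ f p = f p' := by
  constructor
  · intro hc
    refine ⟨Quotient θ, ?_, Quotient.mk θ, ?_, ?_⟩
    · refine
        { le := Quotient.lift₂ (Reach θ) ?wd
          lt := fun a b => Quotient.lift₂ (Reach θ) ?wd a b ∧ ¬ Quotient.lift₂ (Reach θ) ?wd b a
          le_refl := ?_
          le_trans := ?_
          le_antisymm := ?_
          lt_iff_le_not_ge := ?_ }
      · intro a b a' b' ha hb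
        apply propext
        constructor
        · intro h
          exact reach_congr_right hb (reach_congr_left (θ.symm ha) h)
        · intro h
          exact reach_congr_right (θ.symm hb) (reach_congr_left ha h)
      · intro x
        induction x using Quotient.ind
        exact Relation.ReflTransGen.refl
      · intro x y z
        induction x using Quotient.ind
        induction y using Quotient.ind
        induction z using Quotient.ind
        exact fun h h' => Relation.ReflTransGen.trans h h'
      · intro x y
        exact Iff.rfl
      · intro x y
        induction x using Quotient.ind
        induction y using Quotient.ind
        intro h h'
        exact Quotient.sound (key hc h h')
    · intro a b hab
      exact Relation.ReflTransGen.single (Or.inr hab)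
    · intro a b
      exact ⟨fun h => Quotient.sound h, fun h => Quotient.exact h⟩
  · rintro ⟨Q, _, f, hf, hker⟩
    intro n p hsteps hcyc i j
    have hmono : Monotone (fun i : Fin (n + 1) => f (p i)) := by
      rw [Fin.monotone_iff_le_succ]
      intro i
      rcases hsteps i with h | h
      · exact le_of_eq ((hker _ _).mp h)
      · exact hf h.le
    have hconst : ∀ k : Fin (n + 1), f (p k) = f (p 0) := by
      intro k
      have h1 : f (p 0) ≤ f (p k) := hmono (Fin.zero_le k)
      have h2 : f (p k) ≤ f (p (Fin.last n)) := hmono (Fin.le_last k)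
      rw [← hcyc] at h2
      exact le_antisymm h2 h1
    exact (hker _ _).mpr ((hconst i).trans (hconst j).symm)
end
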